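/- arXiv:2505.21122 — 9 statements merged into one kernel-verified Lean document; each statement's English description precedes it below -/
import Mathlib

section
/- For any finite set N and any subset Q ⊆ N with Q nonempty, the sum over all sets T with Q ⊆ T ⊆ N of (|T|-1)!(|N|-|T|)!/|N|! equals 1/|Q|. -/
open Finset

lemma arith_aux (a b : ℕ) :
    ((a.factorial : ℝ) * ((b+1).factorial : ℝ)) / (((a+b+2).factorial : ℕ) : ℝ)
      + ((a+1).factorial : ℝ) * (b.factorial : ℝ) / (((a+b+2).factorial : ℕ) : ℝ)
      = (a.factorial : ℝ) * (b.factorial : ℝ) / (((a+b+1).factorial : ℕ) : ℝ) := by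
  have h2 : (a+b+2).factorial = (a+b+2) * (a+b+1).factorial := by
    rw [show a+b+2 = (a+b+1)+1 from rfl, Nat.factorial_succ]
  have hb : (b+1).factorial = (b+1) * b.factorial := Nat.factorial_succ b
  have ha : (a+1).factorial = (a+1) * a.factorial := Nat.factorial_succ a
  have h1 : ((a+b+1).factorial : ℝ) ≠ 0 := Nat.cast_ne_zero.mpr (Nat.factorial_ne_zero _)
  rw [h2, hb, ha]
  push_cast
  field_simp
  ring

lemma step_aux (Q M : Finset ℕ) (hQ : Q.Nonempty) (hQM : Q ⊆ M) (x : ℕ)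
    (hxM : x ∉ M) (hxQ : x ∉ Q) :
    ∑ T ∈ (insert x M).powerset.filter (fun T => Q ⊆ T),
      ((Nat.factorial (T.card - 1) : ℝ) * (Nat.factorial ((insert x M).card - T.card) : ℝ)) /
        (Nat.factorial (insert x M).card : ℝ)
    = ∑ T ∈ M.powerset.filter (fun T => Q ⊆ T),
      ((Nat.factorial (T.card - 1) : ℝ) * (Nat.factorial (M.card - T.card) : ℝ)) /
        (Nat.factorial M.card : ℝ) := by
  classical
  rw [Finset.sum_filter, Finset.sum_filter, Finset.sum_powerset_insert hxM]
  rw [← Finset.sum_add_distrib]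
  apply Finset.sum_congr rfl
  intro T hT
  rw [Finset.mem_powerset] at hT
  have hxT : x ∉ T := fun h => hxM (hT h)
  have hiff : Q ⊆ insert x T ↔ Q ⊆ T := by
    constructor
    · intro h y hy
      rcases Finset.mem_insert.mp (h hy) with h' | h'
      · exact absurd (h' ▸ hy) hxQ
      · exact h'
    · intro h; exact h.trans (Finset.subset_insert _ _)
  by_cases hQT : Q ⊆ T
  · simp only [hQT, hiff.mpr hQT, if_true]
    have ht1 : 1 ≤ T.card := Finset.card_pos.mpr (hQ.mono hQT)
    have htm : T.card ≤ M.card := Finset.card_le_card hT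
    obtain ⟨a, ha⟩ : ∃ a, T.card = a + 1 := ⟨T.card - 1, by omega⟩
    obtain ⟨b, hb⟩ : ∃ b, M.card = T.card + b := ⟨M.card - T.card, by omega⟩
    rw [Finset.card_insert_of_notMem hxM, Finset.card_insert_of_notMem hxT]
    rw [show T.card - 1 = a by omega, show M.card + 1 - T.card = b + 1 by omega,
      show T.card + 1 - 1 = a + 1 by omega, show M.card + 1 - (T.card + 1) = b by omega,
      show M.card + 1 = a + b + 2 by omega, show M.card - T.card = b by omega,
      show M.card = a + b + 1 by omega]
    exact arith_aux a b
  · simp [hQT, hiff.not.mpr hQT]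

lemma key_aux (Q : Finset ℕ) (hQ : Q.Nonempty) (D : Finset ℕ) (hD : Disjoint Q D) :
    ∑ T ∈ (Q ∪ D).powerset.filter (fun T => Q ⊆ T),
      ((Nat.factorial (T.card - 1) : ℝ) * (Nat.factorial ((Q ∪ D).card - T.card) : ℝ)) /
        (Nat.factorial (Q ∪ D).card : ℝ)
    = 1 / (Q.card : ℝ) := by
  classical
  induction D using Finset.induction_on with
  | empty =>
    rw [Finset.union_empty]
    have hfil : Q.powerset.filter (fun T => Q ⊆ T) = {Q} := by
      ext T
      simp only [Finset.mem_filter, Finset.mem_powerset, Finset.mem_singleton]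
      constructor
      · rintro ⟨h1, h2⟩; exact Finset.Subset.antisymm h1 h2
      · rintro rfl; exact ⟨Finset.Subset.refl _, Finset.Subset.refl _⟩
    rw [hfil, Finset.sum_singleton]
    have hq : 0 < Q.card := Finset.card_pos.mpr hQ
    have : Q.card * (Q.card - 1).factorial = Q.card.factorial := Nat.mul_factorial_pred hq.ne'
    rw [Nat.sub_self, Nat.factorial_zero]
    have hne : (Q.card.factorial : ℝ) ≠ 0 := Nat.cast_ne_zero.mpr (Nat.factorial_ne_zero _)
    have hqne : (Q.card : ℝ) ≠ 0 := Nat.cast_ne_zero.mpr hq.ne'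
    field_simp
    rw [← this]
    push_cast
    ring
  | @insert x s hxs ih =>
    have hxQ : x ∉ Q := fun h => (Finset.disjoint_left.mp hD) h (Finset.mem_insert_self x s)
    have hDs : Disjoint Q s := hD.mono_right (Finset.subset_insert x s)
    have hxM : x ∉ Q ∪ s := by
      simp only [Finset.mem_union, not_or]
      exact ⟨hxQ, hxs⟩
    rw [Finset.union_insert]
    rw [step_aux Q (Q ∪ s) hQ Finset.subset_union_left x hxM hxQ]
    exact ih hDs

theorem stmt0 (N Q : Finset ℕ) (hQ : Q.Nonempty) (hQN : Q ⊆ N) :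
    ∑ T ∈ N.powerset.filter (fun T => Q ⊆ T),
      ((Nat.factorial (T.card - 1) : ℝ) * (Nat.factorial (N.card - T.card) : ℝ)) /
        (Nat.factorial N.card : ℝ)
      = 1 / (Q.card : ℝ) := by
  have hN : Q ∪ (N \ Q) = N := Finset.union_sdiff_of_subset hQN
  have := key_aux Q hQ (N \ Q) Finset.disjoint_sdiff
  rwa [hN] at this
end

section
/- For any finite sets Q, S ⊆ N with Q ∩ S ≠ ∅, the sum over all sets T with Q\S ⊆ T ⊆ N\S of |T|!(|N|-|T|-|S|)!/(|N|-|S|+1)! equals 1/(|Q| - |S ∩ Q| + 1). -/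
open Finset
open Nat

lemma f_succ (m k : ℕ) :
    ∑ j ∈ range (m+2), (m+1).choose j * ((j+k)! * (m+1-j)!)
      = (m+k+2) * ∑ j ∈ range (m+1), m.choose j * ((j+k)! * (m-j)!) := by
  set A : ℕ → ℕ := fun j => (j+k)! * (m+1-j)! with hA
  have key : ∑ i ∈ range (m+1), m.choose (i+1) * A (i+1) + m.choose 0 * A 0
      = ∑ j ∈ range (m+1), m.choose j * A j := by
    rw [← Finset.sum_range_succ' (fun j => m.choose j * A j) (m+1),
      Finset.sum_range_succ, Nat.choose_succ_self, zero_mul, add_zero]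
  calc ∑ j ∈ range (m+2), (m+1).choose j * A j
      = ∑ i ∈ range (m+1), (m+1).choose (i+1) * A (i+1) + (m+1).choose 0 * A 0 :=
        Finset.sum_range_succ' _ _
    _ = ∑ i ∈ range (m+1), (m.choose i * A (i+1) + m.choose (i+1) * A (i+1))
          + m.choose 0 * A 0 := by
        simp only [Nat.choose_succ_succ, add_mul, Nat.choose_zero_right]
    _ = ∑ i ∈ range (m+1), m.choose i * A (i+1)
          + (∑ i ∈ range (m+1), m.choose (i+1) * A (i+1) + m.choose 0 * A 0) := by
        rw [Finset.sum_add_distrib]; ring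
    _ = ∑ i ∈ range (m+1), (m.choose i * A (i+1) + m.choose i * A i) := by
        rw [key, Finset.sum_add_distrib]
    _ = (m+k+2) * ∑ j ∈ range (m+1), m.choose j * ((j+k)! * (m-j)!) := by
        rw [Finset.mul_sum]
        apply Finset.sum_congr rfl
        intro i hi
        simp only [Finset.mem_range, Nat.lt_succ_iff] at hi
        obtain ⟨d, rfl⟩ := Nat.exists_eq_add_of_le hi
        have e1 : i + d + 1 - (i+1) = d := by omega
        have e2 : i + d + 1 - i = d + 1 := by omega
        have e3 : i + d - i = d := by omega
        simp only [hA, e1, e2, e3]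
        have f1 : (i + 1 + k)! = (i + k + 1) * (i + k)! := by
          have : i + 1 + k = (i + k) + 1 := by omega
          rw [this, Nat.factorial_succ]
        have f2 : (d + 1)! = (d + 1) * d ! := by rw [Nat.factorial_succ]
        rw [f1, f2]; ring

lemma f_eq (m k : ℕ) :
    (∑ j ∈ range (m+1), m.choose j * ((j+k)! * (m-j)!)) * (k+1) = (m+k+1)! := by
  induction m with
  | zero => simp [Nat.factorial_succ, Nat.mul_comm]
  | succ m ih =>
      rw [show m + 1 + 1 = m + 2 from rfl, f_succ, mul_assoc, ih]
      have : m + 1 + k + 1 = (m + k + 1) + 1 := by omega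
      rw [this, Nat.factorial_succ]
      rfl

lemma real_eq (m k : ℕ) :
    ∑ j ∈ range (m+1), (m.choose j : ℝ) * ((j+k)! * (m-j)!) / (m+k+1)!
      = 1 / (k+1) := by
  have h := f_eq m k
  have hfac : ((m+k+1)! : ℝ) ≠ 0 := by positivity
  have hk : ((k:ℝ)+1) ≠ 0 := by positivity
  rw [← Finset.sum_div, div_eq_div_iff hfac hk, one_mul, ← h]
  push_cast
  ring


theorem stmt1 (N S Q : Finset ℕ) (hS : S ⊆ N) (hQ : Q ⊆ N) (h : (Q ∩ S).Nonempty) :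
    ∑ T ∈ (N \ S).powerset.filter (fun T => Q \ S ⊆ T),
      ((Nat.factorial T.card : ℝ) * (Nat.factorial (N.card - T.card - S.card) : ℝ)) /
        (Nat.factorial (N.card - S.card + 1) : ℝ)
      = 1 / ((Q.card : ℝ) - ((S ∩ Q).card : ℝ) + 1) := by
  classical
  set M := N \ S with hM
  set K := Q \ S with hK
  set R := M \ K with hR
  have hKM : K ⊆ M := sdiff_subset_sdiff hQ Subset.rfl
  set k := K.card with hk
  set m := R.card with hm
  have hMcard : M.card = m + k := by
    have h1 : R.card = M.card - K.card := card_sdiff_of_subset hKM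
    have h2 : K.card ≤ M.card := card_le_card hKM
    omega
  have hNS : N.card - S.card = m + k := by
    rw [← hMcard, hM, card_sdiff_of_subset hS]
  have hsle : S.card ≤ N.card := card_le_card hS
  -- rewrite LHS as sum over powerset of R
  have step1 : ∑ T ∈ M.powerset.filter (fun T => K ⊆ T),
      ((T.card)! : ℝ) * ((N.card - T.card - S.card)! : ℝ) / ((N.card - S.card + 1)! : ℝ)
      = ∑ T ∈ R.powerset,
      ((T.card + k)! : ℝ) * ((m - T.card)! : ℝ) / ((m + k + 1)! : ℝ) := by
    refine Finset.sum_nbij' (fun T => T \ K) (fun T => T ∪ K) ?_ ?_ ?_ ?_ ?_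
    · intro T hT
      simp only [mem_filter, mem_powerset] at hT
      exact mem_powerset.mpr (sdiff_subset_sdiff hT.1 Subset.rfl)
    · intro T hT
      simp only [mem_powerset] at hT
      refine mem_filter.mpr ⟨mem_powerset.mpr ?_, subset_union_right⟩
      exact union_subset (hT.trans sdiff_subset) hKM
    · intro T hT
      simp only [mem_filter, mem_powerset] at hT
      exact sdiff_union_of_subset hT.2
    · intro T hT
      simp only [mem_powerset] at hT
      have : Disjoint T K := disjoint_of_subset_left hT sdiff_disjoint
      exact union_sdiff_cancel_right this
    · intro T hT
      simp only [mem_filter, mem_powerset] at hT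
      have hcardT : T.card = (T \ K).card + k := by
        have h1 : (T \ K).card = T.card - K.card := card_sdiff_of_subset hT.2
        have h2 : K.card ≤ T.card := card_le_card hT.2
        omega
      have hTM : T.card ≤ m + k := by rw [← hMcard]; exact card_le_card hT.1
      rw [hcardT, hNS]
      have e1 : N.card - ((T \ K).card + k) - S.card = m - (T \ K).card := by omega
      rw [e1]
  rw [step1]
  -- group by cardinality
  rw [Finset.sum_powerset]
  have step2 : ∀ j ∈ range (m + 1),
      ∑ T ∈ powersetCard j R, ((T.card + k)! : ℝ) * ((m - T.card)! : ℝ) / ((m + k + 1)! : ℝ)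
      = (m.choose j : ℝ) * (((j + k)! : ℝ) * ((m - j)! : ℝ)) / ((m + k + 1)! : ℝ) := by
    intro j hj
    have : ∀ T ∈ powersetCard j R, ((T.card + k)! : ℝ) * ((m - T.card)! : ℝ) / ((m + k + 1)! : ℝ)
        = ((j + k)! : ℝ) * ((m - j)! : ℝ) / ((m + k + 1)! : ℝ) := by
      intro T hT
      rw [(mem_powersetCard.mp hT).2]
    rw [Finset.sum_congr rfl this, Finset.sum_const, card_powersetCard, ← hm, nsmul_eq_mul]
    ring
  rw [Finset.sum_congr rfl step2]
  -- apply the key identity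
  rw [real_eq m k]
  -- RHS
  have hq : (Q ∩ S).card + k = Q.card := by
    rw [hk, hK]; exact card_inter_add_card_sdiff Q S
  rw [inter_comm S Q]
  congr 1
  push_cast [← hq]
  ring
end

section
/- The two formulas for the Union Shapley value agree: for every game (N,v) and nonempty S ⊆ N, Σ_{T⊆N, S∩T≠∅} Δ_v(T)/|T| = Σ_{∅≠T⊆N} [(|T|-1)!(|N|-|T|)!/|N|!] · (v(T) - v(T\S)). -/
open Finset

noncomputable def dividend {α : Type*} [DecidableEq α] (v : Finset α → ℝ) (S : Finset α) : ℝ :=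
  ∑ T ∈ S.powerset, (-1 : ℝ) ^ (S.card - T.card) * v T

noncomputable def pc (n t : ℕ) : ℝ :=
  (Nat.factorial (t - 1) : ℝ) * (Nat.factorial (n - t) : ℝ) / (Nat.factorial n : ℝ)

lemma altSum (m : ℕ) : ∀ a : ℕ,
    ∑ k ∈ range (m+1), (m.choose k : ℝ) * (-1)^k / (a+1+k) =
      (a.factorial : ℝ) * m.factorial / (a+1+m).factorial := by
  induction m with
  | zero =>
    intro a
    have hf : (a+1+0).factorial = (a+1)*a.factorial := by simp [Nat.factorial_succ]
    rw [Finset.sum_range_one, hf]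
    simp only [Nat.choose_self, Nat.cast_one, pow_zero, mul_one, one_mul, Nat.factorial_zero]
    push_cast
    rw [div_eq_div_iff (by positivity) (by positivity)]
    ring
  | succ m ih =>
    intro a
    have split : ∑ k ∈ range (m+1+1), ((m+1).choose k : ℝ) * (-1)^k / (a+1+k)
        = (∑ k ∈ range (m+1), (m.choose k : ℝ) * (-1)^k / (a+1+k))
          - ∑ k ∈ range (m+1), (m.choose k : ℝ) * (-1)^k / ((a:ℝ)+1+1+k) := by
      rw [Finset.sum_range_succ' (fun k => ((m+1).choose k : ℝ) * (-1)^k / (a+1+k))]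
      push_cast
      have e1 : ∀ k ∈ range (m+1),
          ((m+1).choose (k+1) : ℝ) * (-1)^(k+1) / ((a:ℝ)+1+((k:ℝ)+1))
          = (m.choose (k+1) : ℝ) * (-1)^(k+1) / ((a:ℝ)+1+((k:ℝ)+1))
            - (m.choose k : ℝ) * (-1)^k / ((a:ℝ)+1+1+k) := by
        intro k _
        rw [Nat.choose_succ_succ]
        push_cast
        have h1 : (a:ℝ)+1+((k:ℝ)+1) ≠ 0 := by positivity
        have h2 : ((a:ℝ)+1)+1+k ≠ 0 := by positivity
        have he : (a:ℝ)+1+((k:ℝ)+1) = ((a:ℝ)+1)+1+k := by ring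
        rw [he]
        field_simp
        ring
      rw [Finset.sum_congr rfl e1, Finset.sum_sub_distrib]
      have e2 : (∑ k ∈ range (m+1), (m.choose (k+1) : ℝ) * (-1)^(k+1) / ((a:ℝ)+1+((k:ℝ)+1)))
            + ((m+1).choose 0 : ℝ) * (-1)^0 / ((a:ℝ)+1+(0:ℝ))
          = ∑ k ∈ range (m+1), (m.choose k : ℝ) * (-1)^k / (a+1+k) := by
        have h3 := Finset.sum_range_succ' (fun k => (m.choose k : ℝ) * (-1)^k / (a+1+k)) (m+1)
        rw [Finset.sum_range_succ] at h3
        simp only [Nat.choose_succ_self, Nat.cast_zero, zero_mul, zero_div, add_zero] at h3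
        push_cast at h3 ⊢
        simp only [Nat.choose_zero_right, Nat.cast_one, pow_zero, one_mul, add_zero] at h3 ⊢
        exact h3.symm
      rw [sub_add_eq_add_sub, e2]
    rw [split, ih a]
    have ih2 := ih (a+1)
    push_cast at ih2
    rw [ih2]
    have f1 : (a+1+(m+1)).factorial = (a+1+m+1) * (a+1+m).factorial := by
      rw [show a+1+(m+1) = (a+1+m)+1 by ring, Nat.factorial_succ]
    have f2 : (a+1+1+m).factorial = (a+1+m+1) * (a+1+m).factorial := by
      rw [show (a+1)+1+m = (a+1+m)+1 by ring, Nat.factorial_succ]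
    have f3 : (a+1).factorial = (a+1) * a.factorial := Nat.factorial_succ a
    have f4 : (m+1).factorial = (m+1) * m.factorial := Nat.factorial_succ m
    rw [f1, f2, f3, f4]
    push_cast
    have h1 : (0:ℝ) < (a+1+m).factorial := by positivity
    rw [div_sub_div _ _ (by positivity) (by positivity), div_eq_div_iff (by positivity) (by positivity)]
    ring

lemma sumB (s : ℕ) : ∀ a m : ℕ,
    ∑ k ∈ range (s+1), (s.choose k : ℝ) * ((a+k).factorial * (s+m-k).factorial)
        / (a+1+s+m).factorial
      = (a.factorial : ℝ) * m.factorial / (a+1+m).factorial := by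
  induction s with
  | zero =>
    intro a m
    simp
  | succ s ih =>
    intro a m
    have split : ∑ k ∈ range (s+1+1), ((s+1).choose k : ℝ) * ((a+k).factorial * (s+1+m-k).factorial) / (a+1+(s+1)+m).factorial
        = (∑ k ∈ range (s+1), (s.choose k : ℝ) * ((a+k).factorial * (s+(m+1)-k).factorial) / (a+1+s+(m+1)).factorial)
          + ∑ k ∈ range (s+1), (s.choose k : ℝ) * (((a+1)+k).factorial * (s+m-k).factorial) / ((a+1)+1+s+m).factorial := by
      rw [Finset.sum_range_succ' (fun k => ((s+1).choose k : ℝ) * ((a+k).factorial * (s+1+m-k).factorial) / (a+1+(s+1)+m).factorial)]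
      have e1 : ∀ k ∈ range (s+1),
          ((s+1).choose (k+1) : ℝ) * ((a+(k+1)).factorial * (s+1+m-(k+1)).factorial) / (a+1+(s+1)+m).factorial
          = (s.choose (k+1) : ℝ) * ((a+(k+1)).factorial * (s+(m+1)-(k+1)).factorial) / (a+1+s+(m+1)).factorial
            + (s.choose k : ℝ) * (((a+1)+k).factorial * (s+m-k).factorial) / ((a+1)+1+s+m).factorial := by
        intro k hk
        rw [Nat.choose_succ_succ]
        have d1 : a+1+(s+1)+m = a+1+s+(m+1) := by omega
        have d2 : a+1+(s+1)+m = (a+1)+1+s+m := by omega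
        have d3 : s+1+m-(k+1) = s+(m+1)-(k+1) := by omega
        have d4 : s+1+m-(k+1) = s+m-k := by omega
        have d5 : a+(k+1) = (a+1)+k := by omega
        push_cast
        rw [add_mul, add_div, add_comm]
        congr 1
        · rw [← d1, ← d3]
        · rw [← d2, ← d4, ← d5]
      rw [Finset.sum_congr rfl e1, Finset.sum_add_distrib]
      have e2 : (∑ k ∈ range (s+1), (s.choose (k+1) : ℝ) * ((a+(k+1)).factorial * (s+(m+1)-(k+1)).factorial) / (a+1+s+(m+1)).factorial)
            + ((s+1).choose 0 : ℝ) * ((a+0).factorial * (s+1+m-0).factorial) / (a+1+(s+1)+m).factorial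
          = ∑ k ∈ range (s+1), (s.choose k : ℝ) * ((a+k).factorial * (s+(m+1)-k).factorial) / (a+1+s+(m+1)).factorial := by
        have h3 := Finset.sum_range_succ' (fun k => (s.choose k : ℝ) * ((a+k).factorial * (s+(m+1)-k).factorial) / (a+1+s+(m+1)).factorial) (s+1)
        rw [Finset.sum_range_succ] at h3
        simp only [Nat.choose_succ_self, Nat.cast_zero, zero_mul, zero_div, add_zero] at h3
        have d6 : s+1+m = s+(m+1) := by omega
        have d7 : a+1+(s+1)+m = a+1+s+(m+1) := by omega
        simp only [Nat.choose_zero_right, Nat.cast_one, one_mul, add_zero, Nat.sub_zero, d6, d7] at h3 ⊢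
        exact h3.symm
      rw [add_right_comm, e2]
    rw [split, ih a (m+1), ih (a+1) m]
    have f1 : (a+1+(m+1)).factorial = (a+1+m+1) * (a+1+m).factorial := by
      rw [show a+1+(m+1) = (a+1+m)+1 by ring, Nat.factorial_succ]
    have f2 : ((a+1)+1+m).factorial = (a+1+m+1) * (a+1+m).factorial := by
      rw [show (a+1)+1+m = (a+1+m)+1 by ring, Nat.factorial_succ]
    have f3 : (a+1).factorial = (a+1) * a.factorial := Nat.factorial_succ a
    have f4 : (m+1).factorial = (m+1) * m.factorial := Nat.factorial_succ m
    rw [f1, f2, f3, f4]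
    push_cast
    rw [div_add_div _ _ (by positivity) (by positivity), div_eq_div_iff (by positivity) (by positivity)]
    ring

lemma coeffG (M R : Finset ℕ) (hR : R.Nonempty) (hRM : R ⊆ M) :
    ∑ T ∈ M.powerset.filter (fun T => R ⊆ T), (-1:ℝ)^(T.card - R.card) / (T.card : ℝ)
      = pc M.card R.card := by
  rw [pc]
  have step1 : ∑ T ∈ M.powerset.filter (fun T => R ⊆ T), (-1:ℝ)^(T.card - R.card) / (T.card : ℝ)
      = ∑ A ∈ (M \ R).powerset, (-1:ℝ)^(A.card) / ((R.card : ℝ) + A.card) := by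
    refine Finset.sum_nbij' (fun T => T \ R) (fun A => R ∪ A) ?_ ?_ ?_ ?_ ?_
    · intro T hT
      simp only [mem_filter, mem_powerset] at hT
      exact mem_powerset.2 (sdiff_subset_sdiff hT.1 Subset.rfl)
    · intro A hA
      simp only [mem_powerset] at hA
      refine mem_filter.2 ⟨mem_powerset.2 (union_subset hRM (hA.trans sdiff_subset)),
        subset_union_left⟩
    · intro T hT
      simp only [mem_filter, mem_powerset] at hT
      exact union_sdiff_of_subset hT.2
    · intro A hA
      simp only [mem_powerset] at hA
      have : Disjoint R A := (disjoint_sdiff.mono_right hA)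
      exact union_sdiff_cancel_left this
    · intro T hT
      simp only [mem_filter, mem_powerset] at hT
      have h1 : (T \ R).card = T.card - R.card := card_sdiff_of_subset hT.2
      have h2 : (T \ R).card + R.card = T.card := card_sdiff_add_card_eq_card hT.2
      rw [h1.symm]
      congr 1
      push_cast [← h2]
      ring
  rw [step1, Finset.sum_powerset_apply_card (fun m => (-1:ℝ)^m / ((R.card : ℝ) + m))]
  obtain ⟨a, ha⟩ : ∃ a, R.card = a + 1 := ⟨R.card - 1, by have := hR.card_pos; omega⟩
  have hc : (M \ R).card = M.card - R.card := card_sdiff_of_subset hRM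
  have hc2 : (M \ R).card + R.card = M.card := card_sdiff_add_card_eq_card hRM
  have e1 : ∀ k ∈ range ((M \ R).card + 1),
      ((M \ R).card.choose k) • ((-1:ℝ)^k / ((R.card : ℝ) + k))
        = ((M \ R).card.choose k : ℝ) * (-1)^k / ((a:ℝ)+1+k) := by
    intro k _
    rw [nsmul_eq_mul, ha, mul_div_assoc]
    push_cast
    ring_nf
  rw [Finset.sum_congr rfl e1, altSum (M \ R).card a]
  have h3 : R.card - 1 = a := by omega
  have h4 : M.card - R.card = (M \ R).card := hc.symm
  have h5 : a + 1 + (M \ R).card = M.card := by omega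
  rw [h3, h4, h5]

theorem stmt6 (N : Finset ℕ) (v : Finset ℕ → ℝ) (hv : v ∅ = 0)
    (S : Finset ℕ) (hS : S.Nonempty) (hSN : S ⊆ N) :
    ∑ T ∈ N.powerset.filter (fun T => (S ∩ T).Nonempty), dividend v T / (T.card : ℝ)
      = ∑ T ∈ N.powerset.filter (fun T => T.Nonempty),
          ((Nat.factorial (T.card - 1) : ℝ) * (Nat.factorial (N.card - T.card) : ℝ)) /
            (Nat.factorial N.card : ℝ) * (v T - v (T \ S)) := by
  classical
  -- canonical form of LHS
  have hL1 : ∑ T ∈ N.powerset.filter (fun T => (S ∩ T).Nonempty), dividend v T / (T.card : ℝ)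
      = ∑ T ∈ N.powerset.filter (fun T => (S ∩ T).Nonempty), ∑ R ∈ T.powerset,
          (-1:ℝ)^(T.card - R.card) * v R / (T.card : ℝ) := by
    refine Finset.sum_congr rfl fun T _ => ?_
    rw [dividend, Finset.sum_div]
  have hL2 : ∑ T ∈ N.powerset.filter (fun T => (S ∩ T).Nonempty), ∑ R ∈ T.powerset,
          (-1:ℝ)^(T.card - R.card) * v R / (T.card : ℝ)
      = ∑ R ∈ N.powerset, ∑ T ∈ N.powerset.filter (fun T => R ⊆ T ∧ (S ∩ T).Nonempty),
          (-1:ℝ)^(T.card - R.card) * v R / (T.card : ℝ) := by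
    refine Finset.sum_comm' ?_
    intro T R
    simp only [mem_filter, mem_powerset]
    constructor
    · rintro ⟨⟨hTN, hST⟩, hRT⟩
      exact ⟨⟨hTN, hRT, hST⟩, hRT.trans hTN⟩
    · rintro ⟨⟨hTN, hRT, hST⟩, _⟩
      exact ⟨⟨hTN, hST⟩, hRT⟩
  have hL3 : ∀ R, ∑ T ∈ N.powerset.filter (fun T => R ⊆ T ∧ (S ∩ T).Nonempty),
          (-1:ℝ)^(T.card - R.card) * v R / (T.card : ℝ)
      = (∑ T ∈ N.powerset.filter (fun T => R ⊆ T ∧ (S ∩ T).Nonempty),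
          (-1:ℝ)^(T.card - R.card) / (T.card : ℝ)) * v R := by
    intro R
    rw [Finset.sum_mul]
    exact Finset.sum_congr rfl fun T _ => by ring
  -- canonical form of RHS
  have hR1 : ∑ T ∈ N.powerset.filter (fun T => T.Nonempty),
          pc N.card T.card * (v T - v (T \ S))
      = ∑ T ∈ N.powerset, pc N.card T.card * (v T - v (T \ S)) := by
    apply Finset.sum_subset (filter_subset _ _)
    intro T hT1 hT2
    simp only [mem_filter, mem_powerset, not_and, Finset.not_nonempty_iff_eq_empty] at hT2
    rw [hT2 (mem_powerset.1 hT1)]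
    simp [hv]
  have hR2 : ∑ T ∈ N.powerset, pc N.card T.card * (v T - v (T \ S))
      = (∑ T ∈ N.powerset, pc N.card T.card * v T)
        - ∑ T ∈ N.powerset, pc N.card T.card * v (T \ S) := by
    rw [← Finset.sum_sub_distrib]
    exact Finset.sum_congr rfl fun T _ => by ring
  -- reindex the subtracted sum
  have hR3 : ∑ T ∈ N.powerset, pc N.card T.card * v (T \ S)
      = ∑ p ∈ (N \ S).powerset ×ˢ S.powerset, pc N.card (p.1.card + p.2.card) * v p.1 := by
    refine Finset.sum_nbij' (fun T => (T \ S, T ∩ S)) (fun p => p.1 ∪ p.2) ?_ ?_ ?_ ?_ ?_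
    · intro T hT
      simp only [mem_powerset] at hT
      exact mem_product.2 ⟨mem_powerset.2 (sdiff_subset_sdiff hT Subset.rfl),
        mem_powerset.2 inter_subset_right⟩
    · intro p hp
      obtain ⟨h1, h2⟩ := mem_product.1 hp
      simp only [mem_powerset] at h1 h2 ⊢
      exact union_subset (h1.trans sdiff_subset) (h2.trans hSN)
    · intro T _
      exact sdiff_union_inter T S
    · intro p hp
      obtain ⟨h1, h2⟩ := mem_product.1 hp
      simp only [mem_powerset] at h1 h2
      have hd : Disjoint p.1 S := sdiff_disjoint.mono_left h1
      have e1 : (p.1 ∪ p.2) \ S = p.1 := by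
        rw [union_sdiff_distrib, sdiff_eq_self_of_disjoint hd,
          sdiff_eq_empty_iff_subset.2 h2, union_empty]
      have e2 : (p.1 ∪ p.2) ∩ S = p.2 := by
        rw [union_inter_distrib_right, (inter_eq_left).2 h2,
          (disjoint_iff_inter_eq_empty.1 hd), empty_union]
      exact Prod.ext e1 e2
    · intro T _
      have : (T \ S).card + (T ∩ S).card = T.card := card_sdiff_add_card_inter T S
      rw [← this]
  have hR4 : ∑ p ∈ (N \ S).powerset ×ˢ S.powerset, pc N.card (p.1.card + p.2.card) * v p.1
      = ∑ R ∈ (N \ S).powerset,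
          (∑ k ∈ range (S.card + 1), (S.card.choose k) • pc N.card (R.card + k)) * v R := by
    rw [Finset.sum_product]
    refine Finset.sum_congr rfl fun R _ => ?_
    rw [← Finset.sum_powerset_apply_card (fun m => pc N.card (R.card + m)), Finset.sum_mul]
  have hps : (N \ S).powerset = N.powerset.filter (fun T => T ⊆ N \ S) := by
    ext T
    simp only [mem_powerset, mem_filter]
    exact ⟨fun h => ⟨h.trans sdiff_subset, h⟩, fun h => h.2⟩
  rw [hL1, hL2]
  have hR' : ∑ T ∈ N.powerset.filter (fun T => T.Nonempty),
        ((Nat.factorial (T.card - 1) : ℝ) * (Nat.factorial (N.card - T.card) : ℝ)) /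
          (Nat.factorial N.card : ℝ) * (v T - v (T \ S))
      = ∑ R ∈ N.powerset, (pc N.card R.card * v R
          - if R ⊆ N \ S then (∑ k ∈ range (S.card + 1),
              (S.card.choose k) • pc N.card (R.card + k)) * v R else 0) := by
    show (∑ T ∈ N.powerset.filter (fun T => T.Nonempty),
        pc N.card T.card * (v T - v (T \ S))) = _
    rw [hR1, hR2, hR3, hR4, hps, Finset.sum_filter, ← Finset.sum_sub_distrib]
  rw [hR']
  refine Finset.sum_congr rfl fun R hRmem => ?_
  rw [hL3 R]
  have hRN : R ⊆ N := mem_powerset.1 hRmem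
  rcases eq_or_ne R ∅ with hRe | hRe
  · subst hRe
    simp [hv]
  · have hRne : R.Nonempty := nonempty_iff_ne_empty.2 hRe
    by_cases hSR : (S ∩ R).Nonempty
    · have hfilter : N.powerset.filter (fun T => R ⊆ T ∧ (S ∩ T).Nonempty)
          = N.powerset.filter (fun T => R ⊆ T) := by
        refine Finset.filter_congr fun T _ => ?_
        refine ⟨fun h => h.1, fun h => ⟨h, hSR.mono (inter_subset_inter Subset.rfl h)⟩⟩
      have hnot : ¬ R ⊆ N \ S := by
        obtain ⟨x, hx⟩ := hSR
        intro h
        exact (mem_sdiff.1 (h (mem_of_mem_inter_right hx))).2 (mem_of_mem_inter_left hx)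
      rw [if_neg hnot, sub_zero, hfilter, coeffG N R hRne hRN]
    · have hSRe : S ∩ R = ∅ := not_nonempty_iff_eq_empty.1 hSR
      have hdisj : Disjoint S R := disjoint_iff_inter_eq_empty.2 hSRe
      have hRNS : R ⊆ N \ S := subset_sdiff.2 ⟨hRN, hdisj.symm⟩
      rw [if_pos hRNS]
      have hsplit : ∑ T ∈ N.powerset.filter (fun T => R ⊆ T ∧ (S ∩ T).Nonempty),
            (-1:ℝ)^(T.card - R.card)/(T.card:ℝ)
          = (∑ T ∈ N.powerset.filter (fun T => R ⊆ T), (-1:ℝ)^(T.card - R.card)/(T.card:ℝ))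
            - ∑ T ∈ (N \ S).powerset.filter (fun T => R ⊆ T),
                (-1:ℝ)^(T.card - R.card)/(T.card:ℝ) := by
        have e1 : (N \ S).powerset.filter (fun T => R ⊆ T)
            = N.powerset.filter (fun T => R ⊆ T ∧ ¬(S ∩ T).Nonempty) := by
          ext T
          simp only [mem_filter, mem_powerset, subset_sdiff, not_nonempty_iff_eq_empty,
            ← disjoint_iff_inter_eq_empty]
          constructor
          · rintro ⟨⟨h1, h2⟩, h3⟩
            exact ⟨h1, h3, h2.symm⟩
          · rintro ⟨h1, h3, h2⟩
            exact ⟨⟨h1, h2.symm⟩, h3⟩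
        have e2 : N.powerset.filter (fun T => R ⊆ T ∧ (S ∩ T).Nonempty)
            = (N.powerset.filter (fun T => R ⊆ T)).filter (fun T => (S ∩ T).Nonempty) := by
          rw [filter_filter]
        have e3 : N.powerset.filter (fun T => R ⊆ T ∧ ¬(S ∩ T).Nonempty)
            = (N.powerset.filter (fun T => R ⊆ T)).filter (fun T => ¬(S ∩ T).Nonempty) := by
          rw [filter_filter]
        rw [e1, eq_sub_iff_add_eq, e2, e3, Finset.sum_filter_add_sum_filter_not]
      have hq : (∑ k ∈ range (S.card + 1), (S.card.choose k) • pc N.card (R.card + k))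
          = pc (N \ S).card R.card := by
        obtain ⟨a, ha⟩ : ∃ a, R.card = a + 1 := ⟨R.card - 1, by have := hRne.card_pos; omega⟩
        have h1 : R.card ≤ (N \ S).card := card_le_card hRNS
        have h2 : (N \ S).card + S.card = N.card := card_sdiff_add_card_eq_card hSN
        obtain ⟨m, hm⟩ : ∃ m, N.card = a+1+S.card+m := ⟨N.card - S.card - R.card, by omega⟩
        have hterm : ∀ k ∈ range (S.card+1), (S.card.choose k) • pc N.card (R.card + k)
            = (S.card.choose k : ℝ) * ((a+k).factorial * (S.card+m-k).factorial)
                / (a+1+S.card+m).factorial := by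
          intro k hk
          have hk' : k ≤ S.card := by
            have := mem_range.1 hk
            omega
          rw [nsmul_eq_mul, pc]
          have d1 : R.card + k - 1 = a + k := by omega
          have d2 : N.card - (R.card + k) = S.card + m - k := by omega
          rw [d1, d2, hm]
          ring
        rw [Finset.sum_congr rfl hterm, sumB S.card a m, pc]
        have d4 : R.card - 1 = a := by omega
        have d5 : (N \ S).card - R.card = m := by omega
        have d3 : (N \ S).card = a+1+m := by omega
        rw [d4, d5, d3]
      rw [hsplit, coeffG N R hRne hRN, coeffG (N \ S) R hRne hRNS, hq]
      ring
end

section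
/- The Merge Shapley value admits the dividend representation: for every game (N,v) and nonempty S ⊆ N, Σ_{T⊆N\S} [|T|!(|N|-|T|-|S|)!/(|N|-|S|+1)!] · (v(T∪S) - v(T)) = Σ_{T⊆N, S∩T≠∅} Δ_v(T)/(|T| - |S∩T| + 1). -/
open Finset

lemma neg_one_powerset (x : Finset ℕ) :
    ∑ m ∈ x.powerset, (-1 : ℝ) ^ m.card = if x = ∅ then 1 else 0 := by
  have h := Finset.sum_powerset_neg_one_pow_card (x := x)
  calc ∑ m ∈ x.powerset, (-1 : ℝ) ^ m.card
      = ((∑ m ∈ x.powerset, (-1 : ℤ) ^ m.card : ℤ) : ℝ) := by push_cast; rfl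
    _ = _ := by rw [h]; split_ifs <;> simp

lemma inversion (v : Finset ℕ → ℝ) (T : Finset ℕ) :
    ∑ R ∈ T.powerset, dividend v R = v T := by
  unfold dividend
  rw [Finset.sum_comm' (s' := fun Q => T.powerset.filter (fun R => Q ⊆ R)) (t' := T.powerset)
    (by
      intro R Q
      simp only [mem_powerset, mem_filter]
      constructor
      · rintro ⟨h1, h2⟩; exact ⟨⟨h1, h2⟩, h2.trans h1⟩
      · rintro ⟨⟨h1, h2⟩, h3⟩; exact ⟨h1, h2⟩)]
  have key : ∀ Q ∈ T.powerset,
      ∑ R ∈ T.powerset.filter (fun R => Q ⊆ R), (-1 : ℝ) ^ (R.card - Q.card) * v Q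
        = (if Q = T then 1 else 0) * v Q := by
    intro Q hQ
    rw [mem_powerset] at hQ
    rw [← Finset.sum_mul]
    congr 1
    have : ∑ R ∈ T.powerset.filter (fun R => Q ⊆ R), (-1 : ℝ) ^ (R.card - Q.card)
        = ∑ D ∈ (T \ Q).powerset, (-1 : ℝ) ^ D.card := by
      refine Finset.sum_nbij' (fun R => R \ Q) (fun D => D ∪ Q) ?_ ?_ ?_ ?_ ?_
      · intro R hR
        simp only [mem_filter, mem_powerset] at hR ⊢
        exact sdiff_subset_sdiff hR.1 Subset.rfl
      · intro D hD
        simp only [mem_powerset] at hD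
        simp only [mem_filter, mem_powerset]
        exact ⟨union_subset (hD.trans sdiff_subset) hQ, subset_union_right⟩
      · intro R hR
        simp only [mem_filter, mem_powerset] at hR
        exact sdiff_union_of_subset hR.2
      · intro D hD
        simp only [mem_powerset] at hD
        rw [union_sdiff_right, sdiff_eq_self_of_disjoint]
        exact Finset.disjoint_left.2 fun a ha hQ' => (mem_sdiff.1 (hD ha)).2 hQ'
      · intro R hR
        simp only [mem_filter, mem_powerset] at hR
        congr 1
        rw [card_sdiff_of_subset hR.2]
    rw [this, neg_one_powerset]
    by_cases h : Q = T
    · subst h; simp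
    · rw [if_neg h, if_neg]
      intro he
      exact h (Subset.antisymm hQ (sdiff_eq_empty_iff_subset.1 he))
  rw [Finset.sum_congr rfl key]
  simp only [ite_mul, one_mul, zero_mul]
  rw [Finset.sum_ite_eq' T.powerset T (fun Q => v Q)]
  simp

lemma marginal (v : Finset ℕ → ℝ) (S T : Finset ℕ) (hd : Disjoint S T) :
    v (T ∪ S) - v T =
      ∑ R ∈ (T ∪ S).powerset.filter (fun R => (S ∩ R).Nonempty), dividend v R := by
  have h1 : v (T ∪ S) = ∑ R ∈ (T ∪ S).powerset, dividend v R := (inversion v _).symm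
  have h2 : (T ∪ S).powerset.filter (fun R => ¬ (S ∩ R).Nonempty) = T.powerset := by
    ext R
    simp only [mem_filter, mem_powerset, not_nonempty_iff_eq_empty, ← disjoint_iff_inter_eq_empty]
    constructor
    · rintro ⟨hRTS, hdis⟩ a ha
      rcases mem_union.1 (hRTS ha) with h | h
      · exact h
      · exact absurd h (Finset.disjoint_right.1 hdis ha)
    · intro hRT
      exact ⟨hRT.trans subset_union_left, hd.mono_right hRT⟩
  rw [h1, ← Finset.sum_filter_add_sum_filter_not ((T ∪ S).powerset)
    (fun R => (S ∩ R).Nonempty), h2, inversion]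
  ring

lemma coeff_nat (m b : ℕ) (hb : b ≤ m) :
    (b + 1) * ∑ j ∈ Finset.range (m - b + 1),
      (m - b).choose j * ((j + b).factorial * (m - b - j).factorial) = (m + 1).factorial := by
  have hterm : ∀ j ∈ Finset.range (m - b + 1),
      (m - b).choose j * ((j + b).factorial * (m - b - j).factorial)
        = (j + b).choose b * (b.factorial * (m - b).factorial) := by
    intro j hj
    rw [Finset.mem_range] at hj
    have hj' : j ≤ m - b := by omega
    have e1 : (m - b).choose j * j.factorial * (m - b - j).factorial = (m - b).factorial :=
      Nat.choose_mul_factorial_mul_factorial hj'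
    have e2 : (j + b).choose b * b.factorial * (j + b - b).factorial = (j + b).factorial :=
      Nat.choose_mul_factorial_mul_factorial (by omega)
    have e3 : j + b - b = j := by omega
    rw [e3] at e2
    calc (m - b).choose j * ((j + b).factorial * (m - b - j).factorial)
        = (m - b).choose j * (((j + b).choose b * b.factorial * j.factorial) *
            (m - b - j).factorial) := by rw [e2]
      _ = (j + b).choose b * b.factorial *
            ((m - b).choose j * j.factorial * (m - b - j).factorial) := by ring
      _ = (j + b).choose b * (b.factorial * (m - b).factorial) := by rw [e1]; ring
  rw [Finset.sum_congr rfl hterm, ← Finset.sum_mul, Nat.sum_range_add_choose]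
  have : m - b + b + 1 = m + 1 := by omega
  rw [this]
  have := Nat.choose_mul_factorial_mul_factorial (show b + 1 ≤ m + 1 by omega)
  have e : m + 1 - (b + 1) = m - b := by omega
  rw [e] at this
  calc (b + 1) * ((m + 1).choose (b + 1) * (b.factorial * (m - b).factorial))
      = (m + 1).choose (b + 1) * ((b + 1) * b.factorial) * (m - b).factorial := by ring
    _ = (m + 1).choose (b + 1) * (b + 1).factorial * (m - b).factorial := by
        rw [Nat.factorial_succ]
    _ = (m + 1).factorial := this

lemma key_sum (M B : Finset ℕ) (hBM : B ⊆ M) :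
    ∑ T ∈ M.powerset.filter (fun T => B ⊆ T),
      ((T.card.factorial : ℝ) * ((M.card - T.card).factorial : ℝ)) /
        ((M.card + 1).factorial : ℝ)
      = 1 / ((B.card : ℝ) + 1) := by
  set m := M.card with hm
  set b := B.card with hb
  have hbm : b ≤ m := card_le_card hBM
  have hcard : (M \ B).card = m - b := card_sdiff_of_subset hBM
  have step1 : ∑ T ∈ M.powerset.filter (fun T => B ⊆ T),
      ((T.card.factorial : ℝ) * ((m - T.card).factorial : ℝ)) / ((m + 1).factorial : ℝ)
      = ∑ U ∈ (M \ B).powerset,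
        (((U.card + b).factorial : ℝ) * ((m - (U.card + b)).factorial : ℝ)) /
          ((m + 1).factorial : ℝ) := by
    refine Finset.sum_nbij' (fun T => T \ B) (fun U => U ∪ B) ?_ ?_ ?_ ?_ ?_
    · intro T hT
      simp only [mem_filter, mem_powerset] at hT ⊢
      exact sdiff_subset_sdiff hT.1 Subset.rfl
    · intro U hU
      simp only [mem_powerset] at hU
      simp only [mem_filter, mem_powerset]
      exact ⟨union_subset (hU.trans sdiff_subset) hBM, subset_union_right⟩
    · intro T hT
      simp only [mem_filter, mem_powerset] at hT
      exact sdiff_union_of_subset hT.2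
    · intro U hU
      simp only [mem_powerset] at hU
      rw [union_sdiff_right, sdiff_eq_self_of_disjoint]
      exact Finset.disjoint_left.2 fun a ha hB' => (mem_sdiff.1 (hU ha)).2 hB'
    · intro T hT
      simp only [mem_filter, mem_powerset] at hT
      have : (T \ B).card + b = T.card := by
        rw [card_sdiff_of_subset hT.2]
        have : b ≤ T.card := card_le_card hT.2
        omega
      rw [this]
  rw [step1, Finset.sum_powerset_apply_card
    (f := fun c => (((c + b).factorial : ℝ) * ((m - (c + b)).factorial : ℝ)) /
      ((m + 1).factorial : ℝ)), hcard]
  have hsub : ∀ j, m - (j + b) = m - b - j := fun j => by omega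
  have hnat := coeff_nat m b hbm
  have hreal : ∑ j ∈ Finset.range (m - b + 1),
      (((m - b).choose j : ℝ) * (((j + b).factorial : ℝ) * ((m - b - j).factorial : ℝ)))
      = ((m + 1).factorial : ℝ) / ((b : ℝ) + 1) := by
    have hc := congrArg (Nat.cast : ℕ → ℝ) hnat
    push_cast at hc
    rw [eq_div_iff (by positivity)]
    linarith [hc]
  calc ∑ j ∈ Finset.range (m - b + 1), (m - b).choose j •
        ((((j + b).factorial : ℝ) * ((m - (j + b)).factorial : ℝ)) / ((m + 1).factorial : ℝ))
      = (∑ j ∈ Finset.range (m - b + 1),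
          (((m - b).choose j : ℝ) * (((j + b).factorial : ℝ) * ((m - b - j).factorial : ℝ)))) /
          ((m + 1).factorial : ℝ) := by
        rw [Finset.sum_div]
        refine Finset.sum_congr rfl fun j _ => ?_
        rw [hsub j, nsmul_eq_mul]
        ring
    _ = 1 / ((b : ℝ) + 1) := by
        rw [hreal]
        have h1 : ((m + 1).factorial : ℝ) ≠ 0 := by positivity
        field_simp

theorem stmt7 (N : Finset ℕ) (v : Finset ℕ → ℝ) (hv : v ∅ = 0)
    (S : Finset ℕ) (hS : S.Nonempty) (hSN : S ⊆ N) :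
    ∑ T ∈ (N \ S).powerset,
      ((Nat.factorial T.card : ℝ) * (Nat.factorial (N.card - T.card - S.card) : ℝ)) /
        (Nat.factorial (N.card - S.card + 1) : ℝ) * (v (T ∪ S) - v T)
      = ∑ T ∈ N.powerset.filter (fun T => (S ∩ T).Nonempty),
          dividend v T / ((T.card : ℝ) - ((S ∩ T).card : ℝ) + 1) := by
  have hM : (N \ S).card = N.card - S.card := card_sdiff_of_subset hSN
  set P : Finset ℕ → Prop := fun R => (S ∩ R).Nonempty with hP
  calc ∑ T ∈ (N \ S).powerset,
      ((Nat.factorial T.card : ℝ) * (Nat.factorial (N.card - T.card - S.card) : ℝ)) /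
        (Nat.factorial (N.card - S.card + 1) : ℝ) * (v (T ∪ S) - v T)
      = ∑ T ∈ (N \ S).powerset,
          ((T.card.factorial : ℝ) * (((N \ S).card - T.card).factorial : ℝ)) /
            (((N \ S).card + 1).factorial : ℝ) *
          ∑ R ∈ N.powerset.filter P, (if R \ S ⊆ T then dividend v R else 0) := by
        refine Finset.sum_congr rfl fun T hT => ?_
        rw [mem_powerset] at hT
        have hd : Disjoint S T := disjoint_sdiff.mono_right hT
        have h1 : N.card - T.card - S.card = (N \ S).card - T.card := by rw [hM]; omega
        have h2 : N.card - S.card + 1 = (N \ S).card + 1 := by rw [hM]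
        rw [h1, h2]
        congr 1
        have hset : (N.powerset.filter P).filter (fun R => R \ S ⊆ T)
            = (T ∪ S).powerset.filter P := by
          ext R
          simp only [mem_filter, mem_powerset, and_assoc]
          constructor
          · rintro ⟨hRN, hPR, hRS⟩
            refine ⟨fun x hx => ?_, hPR⟩
            by_cases hxS : x ∈ S
            · exact mem_union_right _ hxS
            · exact mem_union_left _ (hRS (mem_sdiff.2 ⟨hx, hxS⟩))
          · rintro ⟨hRTS, hPR⟩
            refine ⟨hRTS.trans (union_subset (hT.trans sdiff_subset) hSN), hPR, ?_⟩
            intro x hx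
            rw [mem_sdiff] at hx
            rcases mem_union.1 (hRTS hx.1) with h | h
            · exact h
            · exact absurd h hx.2
        rw [marginal v S T hd, ← hset, Finset.sum_filter]
    _ = ∑ R ∈ N.powerset.filter P, ∑ T ∈ (N \ S).powerset,
          (if R \ S ⊆ T then
            ((T.card.factorial : ℝ) * (((N \ S).card - T.card).factorial : ℝ)) /
              (((N \ S).card + 1).factorial : ℝ) * dividend v R else 0) := by
        simp only [Finset.mul_sum, mul_ite, mul_zero]
        rw [Finset.sum_comm]
    _ = ∑ T ∈ N.powerset.filter P,
          dividend v T / ((T.card : ℝ) - ((S ∩ T).card : ℝ) + 1) := by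
        refine Finset.sum_congr rfl fun R hR => ?_
        rw [mem_filter, mem_powerset] at hR
        rw [← Finset.sum_filter, ← Finset.sum_mul,
          key_sum (N \ S) (R \ S) (sdiff_subset_sdiff hR.1 Subset.rfl)]
        have hc := Finset.card_sdiff_add_card_inter R S
        have hcast : ((R \ S).card : ℝ) + ((S ∩ R).card : ℝ) = (R.card : ℝ) := by
          rw [inter_comm]
          exact_mod_cast congrArg (Nat.cast : ℕ → ℝ) hc
        have hcd : (R.card : ℝ) - ((S ∩ R).card : ℝ) + 1 = ((R \ S).card : ℝ) + 1 := by
          linarith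
        rw [hcd]
        have : ((R \ S).card : ℝ) + 1 ≠ 0 := by positivity
        field_simp
end

section
/- The Interaction Index admits the dividend representation: for every game (N,v) and nonempty S ⊆ N, Σ_{T⊆N\S} [|T|!(|N|-|T|-|S|)!/(|N|-|S|+1)!] · Σ_{R⊆S} (-1)^{|S|-|R|} v(T∪R) = Σ_{S⊆T⊆N} Δ_v(T)/(|T| - |S| + 1). -/
open Finset

lemma disj_of_sub_sdiff {α} [DecidableEq α] {M B U : Finset α} (hU : U ⊆ M \ B) :
    Disjoint B U := (disjoint_sdiff.mono_right hU)

lemma sum_filter_superset {α} [DecidableEq α] {M B : Finset α} (hB : B ⊆ M)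
    (f : Finset α → ℝ) :
    ∑ T ∈ M.powerset.filter (fun T => B ⊆ T), f T = ∑ U ∈ (M \ B).powerset, f (B ∪ U) := by
  refine sum_nbij' (fun T => T \ B) (fun U => B ∪ U) ?_ ?_ ?_ ?_ ?_
  · intro T hT; simp only [mem_filter, mem_powerset] at hT
    simp only [mem_powerset]; exact sdiff_subset_sdiff hT.1 le_rfl
  · intro U hU; simp only [mem_powerset] at hU
    simp only [mem_filter, mem_powerset]
    exact ⟨union_subset hB (hU.trans sdiff_subset), subset_union_left⟩
  · intro T hT; simp only [mem_filter, mem_powerset] at hT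
    exact union_sdiff_of_subset hT.2
  · intro U hU; simp only [mem_powerset] at hU
    exact union_sdiff_cancel_left (disj_of_sub_sdiff hU)
  · intro T hT; simp only [mem_filter, mem_powerset] at hT
    rw [union_sdiff_of_subset hT.2]

lemma alt_sum_powerset {α} [DecidableEq α] (E : Finset α) :
    ∑ U ∈ E.powerset, (-1 : ℝ) ^ U.card = if E = ∅ then 1 else 0 := by
  have h := Finset.sum_powerset_neg_one_pow_card (x := E)
  calc ∑ U ∈ E.powerset, (-1 : ℝ) ^ U.card
      = ((∑ m ∈ E.powerset, (-1 : ℤ) ^ m.card : ℤ) : ℝ) := by push_cast; rfl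
    _ = _ := by rw [h]; split_ifs <;> simp

lemma alt_sum_powerset' {α} [DecidableEq α] (E : Finset α) :
    ∑ U ∈ E.powerset, (-1 : ℝ) ^ (E.card - U.card) = if E = ∅ then 1 else 0 := by
  have key : ∀ U ∈ E.powerset, (-1 : ℝ) ^ (E.card - U.card) = (-1) ^ E.card * (-1) ^ U.card := by
    intro U hU
    rw [mem_powerset] at hU
    have h := card_le_card hU
    rw [← pow_add]
    have h2 : E.card + U.card = (E.card - U.card) + 2 * U.card := by omega
    rw [h2, pow_add, pow_mul]; norm_num
  rw [sum_congr rfl key, ← mul_sum, alt_sum_powerset]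
  split_ifs with h
  · subst h; simp
  · simp

-- generic: ∑_{R ⊆ S} (-1)^(s-r) * (∑_{D ⊆ R} g D) = g S
lemma alt_sum_invert {α} [DecidableEq α] (S : Finset α) (g : Finset α → ℝ) :
    ∑ R ∈ S.powerset, (-1 : ℝ) ^ (S.card - R.card) * ∑ D ∈ R.powerset, g D = g S := by
  have swap :
      ∑ R ∈ S.powerset, ∑ D ∈ R.powerset, (-1 : ℝ) ^ (S.card - R.card) * g D
        = ∑ D ∈ S.powerset, ∑ R ∈ S.powerset.filter (fun R => D ⊆ R),
            (-1 : ℝ) ^ (S.card - R.card) * g D := by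
    refine sum_comm' ?_
    intro R D
    simp only [mem_powerset, mem_filter]
    constructor
    · rintro ⟨h1, h2⟩; exact ⟨⟨h1, h2⟩, h2.trans h1⟩
    · rintro ⟨⟨h1, h2⟩, _⟩; exact ⟨h1, h2⟩
  simp_rw [mul_sum] at *
  rw [swap]
  have inner : ∀ D ∈ S.powerset,
      ∑ R ∈ S.powerset.filter (fun R => D ⊆ R), (-1 : ℝ) ^ (S.card - R.card) * g D
        = (if S \ D = ∅ then 1 else 0) * g D := by
    intro D hD
    rw [mem_powerset] at hD
    rw [sum_filter_superset hD (fun R => (-1 : ℝ) ^ (S.card - R.card) * g D), ← sum_mul,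
      ← alt_sum_powerset' (S \ D)]
    congr 1
    refine sum_congr rfl fun U hU => ?_
    rw [mem_powerset] at hU
    congr 1
    have hdisj : Disjoint D U := disj_of_sub_sdiff hU
    rw [card_union_of_disjoint hdisj]
    have h1 : U.card ≤ (S \ D).card := card_le_card hU
    have h2 : (S \ D).card = S.card - D.card := card_sdiff_of_subset hD
    have h3 : D.card ≤ S.card := card_le_card hD
    omega
  rw [sum_congr rfl inner]
  have : ∀ D ∈ S.powerset, (if S \ D = ∅ then 1 else 0 : ℝ) * g D
      = if D = S then g S else 0 := by
    intro D hD
    rw [mem_powerset] at hD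
    by_cases h : D = S
    · subst h; simp
    · rw [if_neg h, if_neg, mul_comm, mul_zero]
      intro hc
      exact h (Finset.Subset.antisymm hD (by rwa [sdiff_eq_empty_iff_subset] at hc))
  rw [sum_congr rfl this, sum_ite_eq' S.powerset S (fun _ => g S), if_pos (mem_powerset_self S)]

lemma dividend_invert {α} [DecidableEq α] (v : Finset α → ℝ) (A : Finset α) :
    ∑ B ∈ A.powerset, dividend v B = v A := by
  unfold dividend
  have swap :
      ∑ B ∈ A.powerset, ∑ R ∈ B.powerset, (-1 : ℝ) ^ (B.card - R.card) * v R
        = ∑ R ∈ A.powerset, ∑ B ∈ A.powerset.filter (fun B => R ⊆ B),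
            (-1 : ℝ) ^ (B.card - R.card) * v R := by
    refine sum_comm' ?_
    intro B R
    simp only [mem_powerset, mem_filter]
    constructor
    · rintro ⟨h1, h2⟩; exact ⟨⟨h1, h2⟩, h2.trans h1⟩
    · rintro ⟨⟨h1, h2⟩, _⟩; exact ⟨h1, h2⟩
  rw [swap]
  have inner : ∀ R ∈ A.powerset,
      ∑ B ∈ A.powerset.filter (fun B => R ⊆ B), (-1 : ℝ) ^ (B.card - R.card) * v R
        = (if A \ R = ∅ then 1 else 0) * v R := by
    intro R hR
    rw [mem_powerset] at hR
    rw [sum_filter_superset hR (fun B => (-1 : ℝ) ^ (B.card - R.card) * v R), ← sum_mul,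
      ← alt_sum_powerset (A \ R)]
    congr 1
    refine sum_congr rfl fun U hU => ?_
    rw [mem_powerset] at hU
    congr 1
    have hdisj : Disjoint R U := disj_of_sub_sdiff hU
    rw [card_union_of_disjoint hdisj]
    omega
  rw [sum_congr rfl inner]
  have key : ∀ R ∈ A.powerset, (if A \ R = ∅ then 1 else 0 : ℝ) * v R
      = if R = A then v A else 0 := by
    intro R hR
    rw [mem_powerset] at hR
    by_cases h : R = A
    · subst h; simp
    · rw [if_neg h, if_neg, mul_comm, mul_zero]
      intro hc
      exact h (Finset.Subset.antisymm hR (by rwa [sdiff_eq_empty_iff_subset] at hc))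
  rw [sum_congr rfl key, sum_ite_eq' A.powerset A (fun _ => v A), if_pos (mem_powerset_self A)]

lemma sum_powerset_union_disjoint {α} [DecidableEq α] {P Q : Finset α} (h : Disjoint P Q)
    (g : Finset α → ℝ) :
    ∑ C ∈ (P ∪ Q).powerset, g C = ∑ B ∈ P.powerset, ∑ D ∈ Q.powerset, g (B ∪ D) := by
  rw [← sum_product' (s := P.powerset) (t := Q.powerset) (f := fun B D => g (B ∪ D))]
  refine sum_nbij' (fun C => (C ∩ P, C ∩ Q)) (fun p => p.1 ∪ p.2) ?_ ?_ ?_ ?_ ?_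
  · intro C hC
    simp only [mem_powerset] at hC
    simp only [mem_product, mem_powerset]
    exact ⟨inter_subset_right, inter_subset_right⟩
  · rintro ⟨B, D⟩ hp
    simp only [mem_product, mem_powerset] at hp ⊢
    exact union_subset_union hp.1 hp.2
  · intro C hC
    simp only [mem_powerset] at hC
    simp only
    rw [← inter_union_distrib_left, inter_eq_left]
    exact hC
  · rintro ⟨B, D⟩ hp
    simp only [mem_product, mem_powerset] at hp
    have h1 : (B ∪ D) ∩ P = B := by
      rw [union_inter_distrib_right, inter_eq_left.mpr hp.1,
        disjoint_iff_inter_eq_empty.mp (h.symm.mono_left hp.2), union_empty]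
    have h2 : (B ∪ D) ∩ Q = D := by
      rw [union_inter_distrib_right, inter_eq_left.mpr hp.2,
        disjoint_iff_inter_eq_empty.mp (h.mono_left hp.1), empty_union]
    simp [h1, h2]
  · intro C hC
    simp only [mem_powerset] at hC
    simp only
    rw [← inter_union_distrib_left, inter_eq_left.mpr hC]

lemma beta_nat (b k : ℕ) :
    (b + 1) * ∑ j ∈ range (k + 1), k.choose j * ((b + j).factorial * (k - j).factorial)
      = (b + k + 1).factorial := by
  have step1 : ∀ j ∈ range (k + 1), k.choose j * ((b + j).factorial * (k - j).factorial)
      = (j + b).choose b * (b.factorial * k.factorial) := by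
    intro j hj
    rw [mem_range, Nat.lt_succ_iff] at hj
    apply Nat.eq_of_mul_eq_mul_right (Nat.factorial_pos j)
    have e1 : k.choose j * j.factorial * (k - j).factorial = k.factorial :=
      Nat.choose_mul_factorial_mul_factorial hj
    have e2 : (j + b).choose b * b.factorial * j.factorial = (j + b).factorial := by
      have := Nat.choose_mul_factorial_mul_factorial (Nat.le_add_left b j)
      simpa [Nat.add_sub_cancel] using this
    calc k.choose j * ((b + j).factorial * (k - j).factorial) * j.factorial
        = (k.choose j * j.factorial * (k - j).factorial) * (b + j).factorial := by ring
      _ = k.factorial * (b + j).factorial := by rw [e1]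
      _ = ((j + b).choose b * b.factorial * j.factorial) * k.factorial := by
          rw [e2, add_comm j b]; ring
      _ = (j + b).choose b * (b.factorial * k.factorial) * j.factorial := by ring
  rw [sum_congr rfl step1, ← sum_mul, Nat.sum_range_add_choose]
  have e3 : (k + b + 1).choose (b + 1) * (b + 1).factorial * k.factorial
      = (k + b + 1).factorial := by
    have h : b + 1 ≤ k + b + 1 := by omega
    have := Nat.choose_mul_factorial_mul_factorial h
    simpa [show k + b + 1 - (b + 1) = k by omega] using this
  calc (b + 1) * ((k + b + 1).choose (b + 1) * (b.factorial * k.factorial))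
      = (k + b + 1).choose (b + 1) * ((b + 1) * b.factorial) * k.factorial := by ring
    _ = (k + b + 1).choose (b + 1) * (b + 1).factorial * k.factorial := by
        rw [Nat.factorial_succ]
    _ = (b + k + 1).factorial := by rw [e3, add_comm k b]

lemma beta_real (b k : ℕ) :
    ∑ j ∈ range (k + 1), (k.choose j : ℝ) *
      ((b + j).factorial * (k - j).factorial / (b + k + 1).factorial)
      = 1 / ((b : ℝ) + 1) := by
  have hN := beta_nat b k
  have hcast : ((b : ℝ) + 1) * ∑ j ∈ range (k + 1),
      (k.choose j : ℝ) * ((b + j).factorial * (k - j).factorial)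
      = ((b + k + 1).factorial : ℝ) := by
    exact_mod_cast congrArg (Nat.cast : ℕ → ℝ) hN
  have hF : ((b + k + 1).factorial : ℝ) ≠ 0 := by
    exact_mod_cast Nat.factorial_ne_zero _
  have hb : ((b : ℝ) + 1) ≠ 0 := by positivity
  simp_rw [← mul_div_assoc, ← sum_div]
  rw [div_eq_div_iff hF hb, one_mul]
  linarith [hcast]

theorem stmt8 (N : Finset ℕ) (v : Finset ℕ → ℝ) (hv : v ∅ = 0)
    (S : Finset ℕ) (hS : S.Nonempty) (hSN : S ⊆ N) :
    ∑ T ∈ (N \ S).powerset,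
      ((Nat.factorial T.card : ℝ) * (Nat.factorial (N.card - T.card - S.card) : ℝ)) /
        (Nat.factorial (N.card - S.card + 1) : ℝ) *
        (∑ R ∈ S.powerset, (-1 : ℝ) ^ (S.card - R.card) * v (T ∪ R))
      = ∑ T ∈ N.powerset.filter (fun T => S ⊆ T),
          dividend v T / ((T.card : ℝ) - (S.card : ℝ) + 1) := by
  classical
  have hsn : S.card ≤ N.card := card_le_card hSN
  have hMcard : (N \ S).card = N.card - S.card := card_sdiff_of_subset hSN
  set coef : ℕ → ℝ := fun t =>
    ((t.factorial : ℝ) * ((N.card - t - S.card).factorial : ℝ)) /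
      ((N.card - S.card + 1).factorial : ℝ) with hcoef
  -- Step B : inner alternating sum equals sum of dividends
  have stepB : ∀ T ∈ (N \ S).powerset,
      ∑ R ∈ S.powerset, (-1 : ℝ) ^ (S.card - R.card) * v (T ∪ R)
        = ∑ B ∈ T.powerset, dividend v (B ∪ S) := by
    intro T hT
    rw [mem_powerset] at hT
    have hTS : Disjoint T S := sdiff_disjoint.mono_left hT
    have hv' : ∀ R ∈ S.powerset,
        v (T ∪ R) = ∑ B ∈ T.powerset, ∑ D ∈ R.powerset, dividend v (B ∪ D) := by
      intro R hR
      rw [mem_powerset] at hR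
      rw [← dividend_invert v (T ∪ R), sum_powerset_union_disjoint (hTS.mono_right hR)]
    rw [sum_congr rfl (fun R hR => by rw [hv' R hR])]
    simp_rw [mul_sum]
    rw [sum_comm]
    refine sum_congr rfl fun B hB => ?_
    have h := alt_sum_invert S (fun D => dividend v (B ∪ D))
    simp_rw [mul_sum] at h
    exact h
  rw [sum_congr rfl (fun T hT => by rw [stepB T hT])]
  -- swap T and B
  simp_rw [mul_sum]
  rw [sum_comm' (t' := (N \ S).powerset)
    (s' := fun B => (N \ S).powerset.filter (fun T => B ⊆ T)) (by
      intro T B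
      simp only [mem_powerset, mem_filter]
      constructor
      · rintro ⟨h1, h2⟩; exact ⟨⟨h1, h2⟩, h2.trans h1⟩
      · rintro ⟨⟨h1, h2⟩, _⟩; exact ⟨h1, h2⟩)]
  -- evaluate inner sums
  have inner : ∀ B ∈ (N \ S).powerset,
      ∑ T ∈ (N \ S).powerset.filter (fun T => B ⊆ T), coef T.card * dividend v (B ∪ S)
        = 1 / ((B.card : ℝ) + 1) * dividend v (B ∪ S) := by
    intro B hB
    rw [mem_powerset] at hB
    rw [← sum_mul, sum_filter_superset hB (fun T => coef T.card)]
    congr 1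
    have hBM : B.card ≤ (N \ S).card := card_le_card hB
    set k := (N \ S).card - B.card with hk
    have hcardU : ∀ U ∈ ((N \ S) \ B).powerset, coef (B ∪ U).card = coef (B.card + U.card) := by
      intro U hU
      rw [mem_powerset] at hU
      rw [card_union_of_disjoint (disj_of_sub_sdiff hU)]
    rw [sum_congr rfl hcardU, sum_powerset_apply_card (fun u => coef (B.card + u))]
    have hcard2 : ((N \ S) \ B).card = k := by
      rw [card_sdiff_of_subset hB]
    rw [hcard2]
    have hterm : ∀ j ∈ range (k + 1),
        ((k.choose j) • coef (B.card + j))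
          = (k.choose j : ℝ) *
            ((B.card + j).factorial * (k - j).factorial / (B.card + k + 1).factorial) := by
      intro j hj
      rw [mem_range, Nat.lt_succ_iff] at hj
      rw [nsmul_eq_mul]
      congr 1
      simp only [hcoef]
      have e1 : N.card - (B.card + j) - S.card = k - j := by omega
      have e2 : N.card - S.card + 1 = B.card + k + 1 := by omega
      rw [e1, e2, mul_div_assoc]
    rw [sum_congr rfl hterm, beta_real]
  rw [sum_congr rfl inner]
  -- rewrite RHS
  have rhs : ∑ T ∈ N.powerset.filter (fun T => S ⊆ T),
      dividend v T / ((T.card : ℝ) - (S.card : ℝ) + 1)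
      = ∑ U ∈ (N \ S).powerset,
          dividend v (S ∪ U) / (((S ∪ U).card : ℝ) - (S.card : ℝ) + 1) :=
    sum_filter_superset hSN _
  rw [rhs]
  refine sum_congr rfl fun U hU => ?_
  rw [mem_powerset] at hU
  have hd : Disjoint S U := disj_of_sub_sdiff hU
  rw [union_comm S U, card_union_of_disjoint hd.symm]
  push_cast
  rw [add_sub_cancel_right]
  rw [one_div, mul_comm, div_eq_mul_inv]
end

section
/- The Intersection Shapley value admits the marginal representation: for every game (N,v) and nonempty S ⊆ N, Σ_{S⊆T⊆N} Δ_v(T)/|T| = Σ_{S⊆T⊆N} [(|T|-1)!(|N|-|T|)!/|N|!] · Σ_{R⊆S} (-1)^{|R|} v(T\R). -/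
open Finset

private lemma beta_sum : ∀ (m s : ℕ),
    ∑ j ∈ range (m+1), (-1:ℝ)^j * (m.choose j) / (s+1+j)
      = (Nat.factorial s) * (Nat.factorial m) / (Nat.factorial (s+1+m)) := by
  intro m
  induction m with
  | zero =>
    intro s
    rw [Finset.sum_range_one]
    have h1 : ((s+1+0).factorial : ℝ) = (s+1) * s.factorial := by
      rw [Nat.add_zero, Nat.factorial_succ]; push_cast; ring
    rw [h1]
    have h2 : ((s:ℝ)+1) ≠ 0 := by positivity
    have h3 : ((s.factorial : ℝ)) ≠ 0 := by positivity
    simp only [pow_zero, Nat.choose_self, Nat.cast_one, Nat.factorial_zero]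
    push_cast
    field_simp
    ring
  | succ m ih =>
    intro s
    have key : ∑ j ∈ range (m+2), (-1:ℝ)^j * ((m+1).choose j) / (s+1+j)
        = (∑ j ∈ range (m+2), (-1:ℝ)^j * (m.choose j) / (s+1+j))
          - (∑ j ∈ range (m+1), (-1:ℝ)^j * (m.choose j) / ((s:ℝ)+1+1+j)) := by
      rw [Finset.sum_range_succ' (fun j => (-1:ℝ)^j * ((m+1).choose j) / (s+1+j)) (m+1),
          Finset.sum_range_succ' (fun j => (-1:ℝ)^j * ((m).choose j) / (s+1+j)) (m+1)]
      have step : ∀ i ∈ range (m+1),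
          (-1:ℝ)^(i+1) * ((m+1).choose (i+1)) / ((s:ℝ)+1+((i:ℕ)+1 : ℕ))
            = ((-1:ℝ)^(i+1) * ((m).choose (i+1)) / ((s:ℝ)+1+((i:ℕ)+1 : ℕ))
              - (-1:ℝ)^i * ((m).choose i) / ((s:ℝ)+1+1+i)) := by
        intro i _
        rw [Nat.choose_succ_succ]
        have h2 : ((s:ℝ)+1)+1+i ≠ 0 := by positivity
        push_cast
        have e : ((s:ℝ)+1+(i+1)) = ((s:ℝ)+1+1+i) := by ring
        rw [e]
        field_simp
        ring
      rw [Finset.sum_congr rfl step, Finset.sum_sub_distrib]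
      simp only [Nat.choose_zero_right, Nat.cast_one]
      ring
    rw [key]
    rw [Finset.sum_range_succ (fun j => (-1:ℝ)^j * ((m).choose j) / (s+1+j)) (m+1)]
    rw [ih s]
    have ih' := ih (s+1)
    push_cast at ih' ⊢
    rw [ih']
    simp only [Nat.choose_succ_self, Nat.cast_zero]
    have f1 : ((s+1+(m+1)).factorial : ℝ) = ((s:ℝ)+1+m+1) * ((s+1+m).factorial) := by
      have : s+1+(m+1) = (s+1+m)+1 := by ring
      rw [this, Nat.factorial_succ]; push_cast; ring
    have f15 : ((s+1+1+m).factorial : ℝ) = ((s:ℝ)+1+m+1) * ((s+1+m).factorial) := by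
      have : s+1+1+m = (s+1+m)+1 := by ring
      rw [this, Nat.factorial_succ]; push_cast; ring
    have f2 : (((s+1)).factorial : ℝ) = ((s:ℝ)+1) * (s.factorial) := by
      rw [Nat.factorial_succ]; push_cast; ring
    have f3 : (((m+1)).factorial : ℝ) = ((m:ℝ)+1) * (m.factorial) := by
      rw [Nat.factorial_succ]; push_cast; ring
    rw [f1, f15, f2, f3]
    have h1 : ((s+1+m).factorial : ℝ) ≠ 0 := by positivity
    have h2 : ((s:ℝ)+1+m+1) ≠ 0 := by positivity
    field_simp
    ring

private lemma coef_sum (N U : Finset ℕ) (hUN : U ⊆ N) (hU : U.Nonempty) :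
    ∑ T ∈ N.powerset.filter (fun T => U ⊆ T), (-1:ℝ)^(T.card - U.card) / (T.card : ℝ)
      = (Nat.factorial (U.card - 1) : ℝ) * (Nat.factorial (N.card - U.card) : ℝ)
          / (Nat.factorial N.card : ℝ) := by
  have h1 : ∑ T ∈ N.powerset.filter (fun T => U ⊆ T), (-1:ℝ)^(T.card - U.card) / (T.card : ℝ)
      = ∑ J ∈ (N \ U).powerset, (-1:ℝ)^(J.card) / ((U.card : ℝ) + J.card) := by
    apply Finset.sum_nbij' (fun T => T \ U) (fun J => U ∪ J)
    · intro T hT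
      simp only [mem_filter, mem_powerset] at hT
      exact mem_powerset.2 (sdiff_subset_sdiff hT.1 le_rfl)
    · intro J hJ
      simp only [mem_powerset] at hJ
      simp only [mem_filter, mem_powerset]
      exact ⟨union_subset hUN (hJ.trans sdiff_subset), subset_union_left⟩
    · intro T hT
      simp only [mem_filter, mem_powerset] at hT
      exact union_sdiff_of_subset hT.2
    · intro J hJ
      simp only [mem_powerset] at hJ
      rw [union_sdiff_cancel_left]
      exact disjoint_of_subset_right hJ sdiff_disjoint.symm
    · intro T hT
      simp only [mem_filter, mem_powerset] at hT
      have hd : Disjoint U (T \ U) := disjoint_sdiff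
      have hc : T.card = U.card + (T \ U).card := by
        rw [← card_union_of_disjoint hd, union_sdiff_of_subset hT.2]
      rw [hc]
      push_cast
      congr 1
      congr 1
      omega
  rw [h1, Finset.sum_powerset]
  have h2 : ∀ j ∈ range ((N \ U).card + 1),
      ∑ J ∈ powersetCard j (N \ U), (-1:ℝ)^(J.card) / ((U.card : ℝ) + J.card)
        = ((N \ U).card.choose j) • ((-1:ℝ)^j / ((U.card : ℝ) + j)) := by
    intro j _
    rw [← Finset.sum_powersetCard j (N \ U) (fun n => (-1:ℝ)^n / ((U.card : ℝ) + n))]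
  rw [Finset.sum_congr rfl h2]
  obtain ⟨s, hs⟩ : ∃ s, U.card = s + 1 := ⟨U.card - 1, (Nat.succ_pred_eq_of_pos (card_pos.2 hU)).symm⟩
  have hm : (N \ U).card = N.card - U.card := card_sdiff_of_subset hUN
  have hnm : N.card = U.card + (N \ U).card := by
    have := card_le_card hUN; omega
  have key := beta_sum (N \ U).card s
  rw [← hm, hs, Nat.add_sub_cancel]
  rw [show s + 1 + (N \ U).card = N.card by omega] at key
  rw [← key]
  apply Finset.sum_congr rfl
  intro j _
  rw [nsmul_eq_mul]
  push_cast
  ring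

theorem stmt9 (N : Finset ℕ) (v : Finset ℕ → ℝ) (hv : v ∅ = 0)
    (S : Finset ℕ) (hS : S.Nonempty) (hSN : S ⊆ N) :
    ∑ T ∈ N.powerset.filter (fun T => S ⊆ T), dividend v T / (T.card : ℝ)
      = ∑ T ∈ N.powerset.filter (fun T => S ⊆ T),
          ((Nat.factorial (T.card - 1) : ℝ) * (Nat.factorial (N.card - T.card) : ℝ)) /
            (Nat.factorial N.card : ℝ) *
            (∑ R ∈ S.powerset, (-1 : ℝ) ^ R.card * v (T \ R)) := by
  classical
  have hLHS : ∑ T ∈ N.powerset.filter (fun T => S ⊆ T), dividend v T / (T.card : ℝ)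
      = ∑ W ∈ N.powerset,
          (∑ T ∈ N.powerset.filter (fun T => W ∪ S ⊆ T),
            (-1:ℝ)^(T.card - W.card) / (T.card : ℝ)) * v W := by
    have e1 : ∀ T ∈ N.powerset.filter (fun T => S ⊆ T),
        dividend v T / (T.card:ℝ)
          = ∑ W ∈ N.powerset,
              (if W ⊆ T then (-1:ℝ)^(T.card - W.card) * v W / (T.card:ℝ) else 0) := by
      intro T hT
      simp only [mem_filter, mem_powerset] at hT
      rw [dividend, Finset.sum_div, ← Finset.sum_filter]
      apply Finset.sum_congr
      · ext W; simp only [mem_powerset, mem_filter]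
        exact ⟨fun h => ⟨h.trans hT.1, h⟩, fun h => h.2⟩
      · intro W _; rfl
    rw [Finset.sum_congr rfl e1, Finset.sum_filter]
    have e2 : ∀ T ∈ N.powerset,
        (if S ⊆ T then ∑ W ∈ N.powerset,
            (if W ⊆ T then (-1:ℝ)^(T.card - W.card) * v W / (T.card:ℝ) else 0) else 0)
          = ∑ W ∈ N.powerset,
              (if W ∪ S ⊆ T then (-1:ℝ)^(T.card - W.card) * v W / (T.card:ℝ) else 0) := by
      intro T _
      by_cases h : S ⊆ T
      · simp only [h, if_true]
        apply Finset.sum_congr rfl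
        intro W _
        congr 1
        simp [Finset.union_subset_iff, h]
      · simp only [h, if_false]
        symm
        apply Finset.sum_eq_zero
        intro W _
        rw [if_neg]
        intro hc
        exact h (subset_union_right.trans hc)
    rw [Finset.sum_congr rfl e2, Finset.sum_comm]
    apply Finset.sum_congr rfl
    intro W _
    rw [← Finset.sum_filter, Finset.sum_mul]
    apply Finset.sum_congr rfl
    intro T _
    ring
  have hRHS : ∑ T ∈ N.powerset.filter (fun T => S ⊆ T),
          ((Nat.factorial (T.card - 1) : ℝ) * (Nat.factorial (N.card - T.card) : ℝ)) /
            (Nat.factorial N.card : ℝ) *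
            (∑ R ∈ S.powerset, (-1 : ℝ) ^ R.card * v (T \ R))
      = ∑ W ∈ N.powerset,
          ((Nat.factorial ((W ∪ S).card - 1) : ℝ) *
              (Nat.factorial (N.card - (W ∪ S).card) : ℝ)) / (Nat.factorial N.card : ℝ) *
            ((-1:ℝ)^((S \ W).card) * v W) := by
    simp_rw [Finset.mul_sum]
    rw [← Finset.sum_product']
    apply Finset.sum_nbij' (fun p => p.1 \ p.2) (fun W => (W ∪ S, S \ W))
    · rintro ⟨T, R⟩ hp
      simp only [mem_product, mem_filter, mem_powerset] at hp
      exact mem_powerset.2 (sdiff_subset.trans hp.1.1)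
    · intro W hW
      simp only [mem_powerset] at hW
      simp only [mem_product, mem_filter, mem_powerset]
      exact ⟨⟨union_subset hW hSN, subset_union_right⟩, sdiff_subset⟩
    · rintro ⟨T, R⟩ hp
      simp only [mem_product, mem_filter, mem_powerset] at hp
      obtain ⟨⟨hTN, hST⟩, hRS⟩ := hp
      have h1 : T \ R ∪ S = T := by
        apply Finset.Subset.antisymm
        · exact union_subset sdiff_subset hST
        · intro x hx
          by_cases hxr : x ∈ R
          · exact mem_union_right _ (hRS hxr)
          · exact mem_union_left _ (mem_sdiff.2 ⟨hx, hxr⟩)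
      have h2 : S \ (T \ R) = R := by
        ext x
        simp only [mem_sdiff, not_and, not_not]
        constructor
        · rintro ⟨hxS, h⟩; exact h (hST hxS)
        · intro hxR; exact ⟨hRS hxR, fun _ => hxR⟩
      simp only [h1, h2]
    · intro W hW
      simp only [mem_powerset] at hW
      have : (W ∪ S) \ (S \ W) = W := by
        ext x
        simp only [mem_sdiff, mem_union, not_and, not_not]
        constructor
        · rintro ⟨h1 | h1, h2⟩
          · exact h1
          · exact h2 h1
        · intro hxW; exact ⟨Or.inl hxW, fun _ => hxW⟩
      simp only [this]
    · rintro ⟨T, R⟩ hp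
      simp only [mem_product, mem_filter, mem_powerset] at hp
      obtain ⟨⟨hTN, hST⟩, hRS⟩ := hp
      have h1 : T \ R ∪ S = T := by
        apply Finset.Subset.antisymm
        · exact union_subset sdiff_subset hST
        · intro x hx
          by_cases hxr : x ∈ R
          · exact mem_union_right _ (hRS hxr)
          · exact mem_union_left _ (mem_sdiff.2 ⟨hx, hxr⟩)
      have h2 : S \ (T \ R) = R := by
        ext x
        simp only [mem_sdiff, not_and, not_not]
        constructor
        · rintro ⟨hxS, h⟩; exact h (hST hxS)
        · intro hxR; exact ⟨hRS hxR, fun _ => hxR⟩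
      simp only [h1, h2]
  rw [hLHS, hRHS]
  apply Finset.sum_congr rfl
  intro W hW
  rw [mem_powerset] at hW
  have hUN : W ∪ S ⊆ N := union_subset hW hSN
  have hUne : (W ∪ S).Nonempty := hS.mono subset_union_right
  have hcardU : (W ∪ S).card = W.card + (S \ W).card := by
    rw [← Finset.union_sdiff_self_eq_union, card_union_of_disjoint disjoint_sdiff]
  have e : ∀ T ∈ N.powerset.filter (fun T => W ∪ S ⊆ T),
      (-1:ℝ)^(T.card - W.card) / (T.card : ℝ)
        = (-1:ℝ)^((S \ W).card) * ((-1:ℝ)^(T.card - (W ∪ S).card) / (T.card : ℝ)) := by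
    intro T hT
    simp only [mem_filter, mem_powerset] at hT
    have hle : (W ∪ S).card ≤ T.card := card_le_card hT.2
    have hle2 : W.card ≤ (W ∪ S).card := card_le_card subset_union_left
    have : T.card - W.card = (S \ W).card + (T.card - (W ∪ S).card) := by omega
    rw [this, pow_add]
    ring
  rw [Finset.sum_congr rfl e, ← Finset.mul_sum, coef_sum N (W ∪ S) hUN hUne]
  ring
end

section
/- The Union Shapley value is the inclusion-exclusion aggregate of the Intersection Shapley value: for every game (N,v) and nonempty coalition S ⊆ N, US_S(N,v) = Σ_{∅⊊T⊆S} (-1)^{|T|-1} IS_T(N,v). -/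
open Finset

noncomputable def US (N : Finset ℕ) (v : Finset ℕ → ℝ) (S : Finset ℕ) : ℝ :=
  ∑ T ∈ N.powerset.filter (fun T => (S ∩ T).Nonempty), dividend v T / (T.card : ℝ)

noncomputable def IS (N : Finset ℕ) (v : Finset ℕ → ℝ) (S : Finset ℕ) : ℝ :=
  ∑ T ∈ N.powerset.filter (fun T => S ⊆ T), dividend v T / (T.card : ℝ)

noncomputable def SV (N : Finset ℕ) (v : Finset ℕ → ℝ) (i : ℕ) : ℝ :=
  ∑ T ∈ N.powerset.filter (fun T => i ∈ T), dividend v T / (T.card : ℝ)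

lemma key (A : Finset ℕ) :
    ∑ T ∈ A.powerset.filter (fun T => T.Nonempty), (-1 : ℝ) ^ (T.card - 1)
      = if A.Nonempty then 1 else 0 := by
  have hZ : (∑ m ∈ A.powerset, (-1 : ℝ) ^ m.card) = if A = ∅ then 1 else 0 := by
    have h0 := @Finset.sum_powerset_neg_one_pow_card ℕ _ A
    have h1 : ((∑ m ∈ A.powerset, (-1 : ℤ) ^ m.card : ℤ) : ℝ)
        = ((if A = ∅ then 1 else 0 : ℤ) : ℝ) := by rw [h0]
    push_cast at h1
    convert h1 using 2 <;> simp
  have hsplit : (∑ m ∈ A.powerset, (-1 : ℝ) ^ m.card)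
      = 1 + ∑ T ∈ A.powerset.filter (fun T => T.Nonempty), (-1 : ℝ) ^ T.card := by
    rw [← Finset.sum_filter_add_sum_filter_not A.powerset (fun T => T.Nonempty)]
    have he : A.powerset.filter (fun T => ¬ T.Nonempty) = {∅} := by
      ext T
      simp [Finset.not_nonempty_iff_eq_empty]
      rintro rfl; exact Finset.empty_subset _
    rw [he]
    simp [add_comm]
  have hneg : ∑ T ∈ A.powerset.filter (fun T => T.Nonempty), (-1 : ℝ) ^ (T.card - 1)
      = - ∑ T ∈ A.powerset.filter (fun T => T.Nonempty), (-1 : ℝ) ^ T.card := by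
    rw [← Finset.sum_neg_distrib]
    apply Finset.sum_congr rfl
    intro T hT
    have hT' : 1 ≤ T.card := Finset.card_pos.mpr (Finset.mem_filter.mp hT).2
    conv_rhs => rw [show T.card = (T.card - 1) + 1 from (Nat.sub_add_cancel hT').symm]
    rw [pow_succ]
    ring
  rw [hneg]
  have : ∑ T ∈ A.powerset.filter (fun T => T.Nonempty), (-1 : ℝ) ^ T.card
      = (if A = ∅ then 1 else 0) - 1 := by linarith [hZ, hsplit]
  rw [this]
  rcases A.eq_empty_or_nonempty with rfl | h
  · simp
  · simp [h, Finset.nonempty_iff_ne_empty.mp h]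

theorem stmt10 (N : Finset ℕ) (v : Finset ℕ → ℝ) (hv : v ∅ = 0)
    (S : Finset ℕ) (hS : S.Nonempty) (hSN : S ⊆ N) :
    US N v S = ∑ T ∈ S.powerset.filter (fun T => T.Nonempty),
      (-1 : ℝ) ^ (T.card - 1) * IS N v T := by
  unfold US IS
  rw [Finset.sum_filter]
  have hrhs : ∀ T ∈ S.powerset.filter (fun T => T.Nonempty),
      (-1 : ℝ) ^ (T.card - 1) * (∑ W ∈ N.powerset.filter (fun W => T ⊆ W), dividend v W / W.card)
      = ∑ W ∈ N.powerset, (-1 : ℝ) ^ (T.card - 1) * (if T ⊆ W then dividend v W / W.card else 0) := by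
    intro T _
    rw [Finset.sum_filter, Finset.mul_sum]
  rw [Finset.sum_congr rfl hrhs, Finset.sum_comm]
  apply Finset.sum_congr rfl
  intro W hW
  have : ∑ T ∈ S.powerset.filter (fun T => T.Nonempty),
      (-1 : ℝ) ^ (T.card - 1) * (if T ⊆ W then dividend v W / W.card else 0)
      = (∑ T ∈ (S ∩ W).powerset.filter (fun T => T.Nonempty), (-1 : ℝ) ^ (T.card - 1))
        * (dividend v W / W.card) := by
    rw [Finset.sum_mul]
    rw [← Finset.sum_filter_add_sum_filter_not (S.powerset.filter (fun T => T.Nonempty))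
      (fun T => T ⊆ W)]
    have h2 : ∑ T ∈ (S.powerset.filter (fun T => T.Nonempty)).filter (fun T => ¬ T ⊆ W),
        (-1 : ℝ) ^ (T.card - 1) * (if T ⊆ W then dividend v W / W.card else 0) = 0 := by
      apply Finset.sum_eq_zero; intro T hT
      simp [(Finset.mem_filter.mp hT).2]
    rw [h2, add_zero]
    have hset : (S.powerset.filter (fun T => T.Nonempty)).filter (fun T => T ⊆ W)
        = (S ∩ W).powerset.filter (fun T => T.Nonempty) := by
      ext T
      simp only [Finset.mem_filter, Finset.mem_powerset, Finset.subset_inter_iff]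
      tauto
    rw [hset]
    apply Finset.sum_congr rfl
    intro T hT
    have hTW : T ⊆ W := ((Finset.mem_powerset.mp (Finset.mem_filter.mp hT).1).trans
      Finset.inter_subset_right)
    simp [hTW]
  rw [this, key]
  by_cases h : (S ∩ W).Nonempty <;> simp [h]
end

section
/- The Union Shapley value satisfies Balanced Contributions: for every game (N,v) and coalitions S, T ⊆ N, US_S(N,v) - US_{S\T}(N\T, v) = US_T(N,v) - US_{T\S}(N\S, v), with the convention US_∅ = 0. -/
open Finset

lemma key_s13 (N : Finset ℕ) (v : Finset ℕ → ℝ) (S T : Finset ℕ) :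
    US N v S - US (N \ T) v (S \ T) =
    ∑ T' ∈ N.powerset.filter (fun T' => (S ∩ T').Nonempty ∧ (T ∩ T').Nonempty),
      dividend v T' / (T'.card : ℝ) := by
  have hset : (N \ T).powerset.filter (fun T' => ((S \ T) ∩ T').Nonempty) =
      (N.powerset.filter (fun T' => (S ∩ T').Nonempty)).filter
        (fun T' => ¬ (T ∩ T').Nonempty) := by
    ext T'
    rw [mem_filter]
    simp only [mem_filter, mem_powerset, subset_sdiff, not_nonempty_iff_eq_empty,
      eq_empty_iff_forall_notMem, mem_inter, Finset.disjoint_left, not_and,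
      Finset.Nonempty, mem_sdiff]
    push_neg
    aesop
  rw [US, US, hset, ← Finset.sum_filter_add_sum_filter_not
    (N.powerset.filter (fun T' => (S ∩ T').Nonempty)) (fun T' => (T ∩ T').Nonempty)]
  rw [Finset.filter_filter]
  ring

theorem stmt13 (N : Finset ℕ) (v : Finset ℕ → ℝ) (hv : v ∅ = 0)
    (S T : Finset ℕ) (hS : S ⊆ N) (hT : T ⊆ N) :
    US N v S - US (N \ T) v (S \ T) = US N v T - US (N \ S) v (T \ S) := by
  rw [key_s13 N v S T, key_s13 N v T S]
  apply Finset.sum_congr _ (fun _ _ => rfl)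
  congr 1
  ext T'
  exact and_comm
end

section
/- Any Shapley-value consistent group value satisfying Balanced Contributions is unique, and hence equals the Union Shapley value: if φ and ψ both satisfy φ_{{i}}(N,v) = SV_i(N,v) for all i and the Balanced Contributions property (with value 0 for the empty coalition), then φ_S(N,v) = ψ_S(N,v) for all games (N,v) and all coalitions S. -/
open Finset

theorem stmt14 (φ ψ : Finset ℕ → (Finset ℕ → ℝ) → Finset ℕ → ℝ)
    (hφ0 : ∀ N v, φ N v ∅ = 0) (hψ0 : ∀ N v, ψ N v ∅ = 0)
    (hφSV : ∀ (N : Finset ℕ) (v : Finset ℕ → ℝ), v ∅ = 0 → ∀ i ∈ N, φ N v {i} = SV N v i)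
    (hψSV : ∀ (N : Finset ℕ) (v : Finset ℕ → ℝ), v ∅ = 0 → ∀ i ∈ N, ψ N v {i} = SV N v i)
    (hφBC : ∀ (N : Finset ℕ) (v : Finset ℕ → ℝ), v ∅ = 0 → ∀ S ⊆ N, ∀ T ⊆ N,
      φ N v S - φ (N \ T) v (S \ T) = φ N v T - φ (N \ S) v (T \ S))
    (hψBC : ∀ (N : Finset ℕ) (v : Finset ℕ → ℝ), v ∅ = 0 → ∀ S ⊆ N, ∀ T ⊆ N,
      ψ N v S - ψ (N \ T) v (S \ T) = ψ N v T - ψ (N \ S) v (T \ S)) :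
    ∀ (N : Finset ℕ) (v : Finset ℕ → ℝ), v ∅ = 0 → ∀ S ⊆ N, φ N v S = ψ N v S := by
  intro N v hv
  have key : ∀ n (N S : Finset ℕ), S.card = n → S ⊆ N → φ N v S = ψ N v S := by
    intro n
    induction n with
    | zero =>
      intro N S hc hS
      rw [Finset.card_eq_zero.mp hc, hφ0, hψ0]
    | succ n ih =>
      intro N S hc hS
      obtain ⟨i, hi⟩ := Finset.card_pos.mp (by omega : 0 < S.card)
      have hiN : i ∈ N := hS hi
      have hiS : ({i} : Finset ℕ) ⊆ N := by simpa
      have h1 := hφBC N v hv S hS {i} hiS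
      have h2 := hψBC N v hv S hS {i} hiS
      have e : ({i} : Finset ℕ) \ S = ∅ := by
        rw [Finset.sdiff_eq_empty_iff_subset]; simpa
      rw [e, hφ0] at h1
      rw [e, hψ0] at h2
      have hSV1 := hφSV N v hv i hiN
      have hSV2 := hψSV N v hv i hiN
      have hsub : S \ {i} ⊆ N \ {i} := Finset.sdiff_subset_sdiff hS (le_refl _)
      have hcard : (S \ {i}).card = n := by
        rw [Finset.card_sdiff_of_subset (by simpa)]
        simp [hc]
      have h3 := ih (N \ {i}) (S \ {i}) hcard hsub
      linarith
  intro S hS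
  exact key S.card N S rfl hS
end
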